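/- arXiv:1706.00476 — 5 statements merged into one kernel-verified Lean document; each statement's English description precedes it below -/
import Mathlib

section
/- Let V ∈ ℝ^{k×n} have unit-norm columns v_i, and let C be symmetric with zero diagonal. For a single coordinate update replacing v_i by v̂_i = -g_i/‖g_i‖ where g_i = Σ_j c_{ij} v_j (with g_i ≠ 0), the decrease in the objective f(V) = ⟨C, VᵀV⟩ equals 2 g_iᵀ(v_i − v̂_i) = ‖g_i‖ · ‖v_i − v̂_i‖². -/
open scoped RealInnerProductSpace

/-- Single coordinate Mixing update decreases the objective by
`2 gᵀ(vᵢ - v̂ᵢ) = ‖g‖ ‖vᵢ - v̂ᵢ‖²`. -/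
theorem mixing_single_update_decrease
    (k n : ℕ) (C : Matrix (Fin n) (Fin n) ℝ) (hC : C.IsSymm)
    (hdiag : ∀ i, C i i = 0)
    (v : Fin n → EuclideanSpace ℝ (Fin k)) (hv : ∀ j, ‖v j‖ = 1)
    (i : Fin n) (g : EuclideanSpace ℝ (Fin k))
    (hg : g = ∑ j, C i j • v j) (hg0 : g ≠ 0)
    (vhat : EuclideanSpace ℝ (Fin k)) (hvhat : vhat = -(‖g‖⁻¹ • g)) :
    (∑ a, ∑ b, C a b * ⟪v a, v b⟫) -
      (∑ a, ∑ b, C a b *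
        ⟪Function.update v i vhat a, Function.update v i vhat b⟫) =
      2 * ⟪g, v i - vhat⟫ ∧
    2 * ⟪g, v i - vhat⟫ = ‖g‖ * ‖v i - vhat‖ ^ 2 := by
  have hsym : ∀ a b, C a b = C b a := fun a b => hC.apply b a
  set w := Function.update v i vhat with hw
  have hwne : ∀ a, a ≠ i → w a = v a := fun a ha => Function.update_of_ne ha _ _
  have hwi : w i = vhat := Function.update_self _ _ _
  -- t a b : the per-entry difference
  set t : Fin n → Fin n → ℝ :=
    fun a b => C a b * (⟪v a, v b⟫ - ⟪w a, w b⟫) with ht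
  have ht0 : ∀ a b, a ≠ i → b ≠ i → t a b = 0 := by
    intro a b ha hb
    simp [ht, hwne a ha, hwne b hb]
  have hgi : ∀ x : EuclideanSpace ℝ (Fin k), ⟪x, g⟫ = ∑ b, C i b * ⟪x, v b⟫ := by
    intro x
    rw [hg, inner_sum]
    exact Finset.sum_congr rfl fun b _ => real_inner_smul_right _ _ _
  have hrow : ∑ b, t i b = ⟪v i - vhat, g⟫ := by
    rw [hgi]
    refine Finset.sum_congr rfl fun b _ => ?_
    by_cases hb : b = i
    · subst hb; simp [ht, hdiag]
    · simp only [ht, hwi, hwne b hb, inner_sub_left]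
  have hcol : ∑ a, t a i = ⟪v i - vhat, g⟫ := by
    rw [hgi]
    refine Finset.sum_congr rfl fun a _ => ?_
    by_cases ha : a = i
    · subst ha; simp [ht, hdiag]
    · simp only [ht, hwi, hwne a ha, hsym a i]
      rw [inner_sub_left, real_inner_comm (v i) (v a), real_inner_comm vhat (v a)]
  have htii : t i i = 0 := by simp [ht, hdiag]
  have hsplit : (∑ a, ∑ b, t a b) = (∑ b, t i b) + ∑ a, t a i := by
    rw [Fintype.sum_eq_add_sum_compl i (fun a => ∑ b, t a b)]
    congr 1
    have : ∀ a ∈ ({i}ᶜ : Finset (Fin n)), (∑ b, t a b) = t a i := by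
      intro a ha
      have ha' : a ≠ i := by simpa using ha
      exact Finset.sum_eq_single_of_mem i (Finset.mem_univ i)
        (fun b _ hb => ht0 a b ha' hb)
    rw [Finset.sum_congr rfl this]
    rw [Fintype.sum_eq_add_sum_compl i (fun a => t a i), htii, zero_add]
  have hmain : (∑ a, ∑ b, C a b * ⟪v a, v b⟫) -
      (∑ a, ∑ b, C a b * ⟪w a, w b⟫) = ∑ a, ∑ b, t a b := by
    rw [← Finset.sum_sub_distrib]
    refine Finset.sum_congr rfl fun a _ => ?_
    rw [← Finset.sum_sub_distrib]
    refine Finset.sum_congr rfl fun b _ => ?_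
    simp [ht]; ring
  have hfirst : (∑ a, ∑ b, C a b * ⟪v a, v b⟫) -
      (∑ a, ∑ b, C a b * ⟪w a, w b⟫) = 2 * ⟪g, v i - vhat⟫ := by
    rw [hmain, hsplit, hrow, hcol, real_inner_comm]
    ring
  refine ⟨hfirst, ?_⟩
  -- second part
  have hng : (0:ℝ) < ‖g‖ := norm_pos_iff.mpr hg0
  have hgvhat : g = -(‖g‖ • vhat) := by
    rw [hvhat, smul_neg, neg_neg, smul_smul, mul_inv_cancel₀ (ne_of_gt hng), one_smul]
  have hnvhat : ‖vhat‖ = 1 := by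
    rw [hvhat, norm_neg, norm_smul, norm_inv, norm_norm,
      inv_mul_cancel₀ (ne_of_gt hng)]
  have hinner : ⟪g, v i - vhat⟫ = ‖g‖ * (1 - ⟪vhat, v i⟫) := by
    have h1 : ⟪g, v i - vhat⟫ = ⟪-(‖g‖ • vhat), v i - vhat⟫ := by rw [← hgvhat]
    rw [h1, inner_neg_left, real_inner_smul_left, inner_sub_right,
      real_inner_self_eq_norm_sq, hnvhat]
    ring
  have hnorm : ‖v i - vhat‖ ^ 2 = 2 * (1 - ⟪vhat, v i⟫) := by
    rw [← real_inner_self_eq_norm_sq, inner_sub_sub_self,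
      real_inner_self_eq_norm_sq, real_inner_self_eq_norm_sq, hv i, hnvhat,
      real_inner_comm (v i) vhat]
    ring
  rw [hinner, hnorm]; ring
end

section
/- Let V ∈ ℝ^{k×n} have rank strictly less than k, with columns v_i, and let P = diag(P_1,…,P_n) ∈ ℝ^{nk×nk} where P_i = I_k − v_i v_iᵀ. Then for any matrices A, B ∈ ℝ^{n×n}, every eigenvalue of AB is an eigenvalue of J = (A ⊗ I_k) P (B ⊗ I_k). -/
open scoped Kronecker

lemma kron_step {n k : ℕ} (M : Matrix (Fin n) (Fin n) ℝ) (f : Fin n → ℂ) (c : Fin k → ℂ) :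
    ((M ⊗ₖ (1 : Matrix (Fin k) (Fin k) ℝ)).map (algebraMap ℝ ℂ)).mulVec
      (fun p => f p.1 * c p.2)
    = fun p => (M.map (algebraMap ℝ ℂ)).mulVec f p.1 * c p.2 := by
  funext p
  obtain ⟨i, j⟩ := p
  simp only [Matrix.mulVec, dotProduct, Fintype.sum_prod_type, Matrix.map_apply,
    Matrix.kroneckerMap_apply, Matrix.one_apply, map_mul, apply_ite, map_one, map_zero,
    ite_mul, one_mul, zero_mul, mul_ite, mul_zero, mul_one]
  rw [Finset.sum_mul]
  refine Finset.sum_congr rfl fun i' _ => ?_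
  rw [Finset.sum_ite_eq Finset.univ j fun j' => algebraMap ℝ ℂ (M i i') * (f i' * c j')]
  simp [mul_assoc]

lemma P_step {n k : ℕ} (V : Matrix (Fin k) (Fin n) ℝ)
    (P : Matrix (Fin n × Fin k) (Fin n × Fin k) ℝ)
    (hP : ∀ p q : Fin n × Fin k, P p q =
      if p.1 = q.1 then
        (if p.2 = q.2 then (1 : ℝ) else 0) - V p.2 p.1 * V q.2 q.1
      else 0)
    (r : Fin k → ℝ) (hr : ∀ i, ∑ a, V a i * r a = 0) (u : Fin n → ℂ) :
    (P.map (algebraMap ℝ ℂ)).mulVec (fun p => u p.1 * (r p.2 : ℂ))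
      = fun p => u p.1 * (r p.2 : ℂ) := by
  funext p
  obtain ⟨i, j⟩ := p
  simp only [Matrix.mulVec, dotProduct, Fintype.sum_prod_type, Matrix.map_apply, hP]
  have h1 : ∀ i' : Fin n, ∀ j' : Fin k,
      (algebraMap ℝ ℂ) (if (i,j).1 = (i',j').1 then
        (if (i,j).2 = (i',j').2 then (1:ℝ) else 0) - V (i,j).2 (i,j).1 * V (i',j').2 (i',j').1
        else 0) * (u i' * (r j' : ℂ))
      = if i = i' then
          ((if j = j' then (1:ℂ) else 0) - (V j i : ℂ) * (V j' i : ℂ)) * (u i' * (r j' : ℂ))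
        else 0 := by
    intro i' j'
    by_cases h : i = i' <;> simp [h, apply_ite]
  simp only [h1]
  rw [Finset.sum_comm]
  simp only [Finset.sum_ite_eq Finset.univ i, Finset.mem_univ, if_true]
  have h2 : ∀ j' : Fin k,
      ((if j = j' then (1:ℂ) else 0) - (V j i : ℂ) * (V j' i : ℂ)) * (u i * (r j' : ℂ))
      = (if j = j' then u i * (r j' : ℂ) else 0) - (V j i : ℂ) * u i * ((V j' i : ℂ) * (r j' : ℂ)) := by
    intro j'
    by_cases h : j = j' <;> simp [h] <;> ring
  simp only [h2, Finset.sum_sub_distrib, Finset.sum_ite_eq Finset.univ j, Finset.mem_univ,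
    if_true, ← Finset.mul_sum]
  have h0 : ∑ j' : Fin k, (V j' i : ℂ) * (r j' : ℂ) = 0 := by
    exact_mod_cast congrArg (Complex.ofReal) (hr i)
  rw [h0]
  ring

/-- If `rank V < k`, every eigenvalue of `A * B` is an eigenvalue of
`J = (A ⊗ I_k) P (B ⊗ I_k)` where `P` is the block-diagonal rejection
matrix of the columns of `V`. -/
theorem overlapping_eigenvalues
    (k n : ℕ) (V : Matrix (Fin k) (Fin n) ℝ) (hrank : V.rank < k)
    (P : Matrix (Fin n × Fin k) (Fin n × Fin k) ℝ)
    (hP : ∀ p q : Fin n × Fin k, P p q =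
      if p.1 = q.1 then
        (if p.2 = q.2 then (1 : ℝ) else 0) - V p.2 p.1 * V q.2 q.1
      else 0)
    (A B : Matrix (Fin n) (Fin n) ℝ)
    (J : Matrix (Fin n × Fin k) (Fin n × Fin k) ℝ)
    (hJ : J = ((A ⊗ₖ (1 : Matrix (Fin k) (Fin k) ℝ)) * P *
      (B ⊗ₖ (1 : Matrix (Fin k) (Fin k) ℝ))))
    (μ : ℂ) (q : Fin n → ℂ) (hq : q ≠ 0)
    (heig : ((A * B).map (algebraMap ℝ ℂ)).mulVec q = μ • q) :
    ∃ w : Fin n × Fin k → ℂ, w ≠ 0 ∧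
      (J.map (algebraMap ℝ ℂ)).mulVec w = μ • w := by
  classical
  -- find a nonzero vector in the kernel of Vᵀ
  have hker : ∃ r : Fin k → ℝ, r ≠ 0 ∧ V.transpose.mulVec r = 0 := by
    by_contra hcon
    push_neg at hcon
    have hinj : Function.Injective V.transpose.mulVecLin := by
      rw [← LinearMap.ker_eq_bot]
      rw [Submodule.eq_bot_iff]
      intro r hrmem
      by_contra hr0
      exact hcon r hr0 hrmem
    have hrankT : V.transpose.rank = k := by
      rw [Matrix.rank, LinearMap.finrank_range_of_inj hinj]
      simp
    rw [← Matrix.rank_transpose, hrankT] at hrank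
    exact lt_irrefl _ hrank
  obtain ⟨r, hr0, hrker⟩ := hker
  have hr : ∀ i, ∑ a, V a i * r a = 0 := by
    intro i
    have := congrFun hrker i
    simpa [Matrix.mulVec, dotProduct, Matrix.transpose_apply] using this
  set c : Fin k → ℂ := fun j => (r j : ℂ) with hc
  refine ⟨fun p => q p.1 * c p.2, ?_, ?_⟩
  · -- nonzero
    obtain ⟨i, hi⟩ := Function.ne_iff.mp hq
    obtain ⟨j, hj⟩ := Function.ne_iff.mp hr0
    intro hw
    have := congrFun hw (i, j)
    simp only [Pi.zero_apply, mul_eq_zero] at this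
    rcases this with h | h
    · exact hi h
    · exact hj (by simpa [hc] using h)
  · -- eigen equation
    rw [hJ, Matrix.map_mul, Matrix.map_mul, ← Matrix.mulVec_mulVec, ← Matrix.mulVec_mulVec]
    rw [kron_step B q c]
    have hPs : (P.map (algebraMap ℝ ℂ)).mulVec
        (fun p => (B.map (algebraMap ℝ ℂ)).mulVec q p.1 * c p.2)
        = fun p => (B.map (algebraMap ℝ ℂ)).mulVec q p.1 * c p.2 :=
      P_step V P hP r hr _
    rw [hPs, kron_step A _ c]
    have hAB : (A.map (algebraMap ℝ ℂ)).mulVec ((B.map (algebraMap ℝ ℂ)).mulVec q) = μ • q := by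
      rw [Matrix.mulVec_mulVec, ← Matrix.map_mul]
      exact heig
    rw [hAB]
    funext p
    simp [mul_assoc]
end

section
/- Consider the Mixing method with step size θ > 0 updating v̂_i = (v_i − θ g_i)/y_i with y_i = ‖v_i − θ g_i‖, where g_i = Σ_{j<i} c_{ij} v̂_j + Σ_{j>i} c_{ij} v_j. Then for one full sweep, f(V) − f(V̂) = Σ_{i=1}^n ((1 + y_i)/θ) ‖v_i − v̂_i‖², where f(V) = ⟨C, VᵀV⟩ and C has zero diagonal. -/
open scoped RealInnerProductSpace

/-- One full sweep of the Mixing method with step size `θ` satisfies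
`f(V) - f(V̂) = Σᵢ ((1 + yᵢ)/θ) ‖vᵢ - v̂ᵢ‖²`. -/
theorem mixing_stepsize_sweep_decrease
    (k n : ℕ) (C : Matrix (Fin n) (Fin n) ℝ) (hC : C.IsSymm)
    (hdiag : ∀ i, C i i = 0) (θ : ℝ) (hθ : 0 < θ)
    (v vhat : Fin n → EuclideanSpace ℝ (Fin k))
    (hv : ∀ j, ‖v j‖ = 1)
    (g : Fin n → EuclideanSpace ℝ (Fin k))
    (hg : ∀ i, g i =
      (∑ j ∈ Finset.univ.filter (fun j => j < i), C i j • vhat j) +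
      (∑ j ∈ Finset.univ.filter (fun j => i < j), C i j • v j))
    (y : Fin n → ℝ) (hy : ∀ i, y i = ‖v i - θ • g i‖)
    (hy0 : ∀ i, y i ≠ 0)
    (hvhat : ∀ i, vhat i = (y i)⁻¹ • (v i - θ • g i)) :
    (∑ a, ∑ b, C a b * ⟪v a, v b⟫) -
      (∑ a, ∑ b, C a b * ⟪vhat a, vhat b⟫) =
      ∑ i, ((1 + y i) / θ) * ‖v i - vhat i‖ ^ 2 := by
  have hθ' : θ ≠ 0 := ne_of_gt hθ
  have hypos : ∀ i, 0 < y i := by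
    intro i
    have h1 : 0 ≤ y i := by rw [hy]; exact norm_nonneg _
    exact lt_of_le_of_ne h1 (Ne.symm (hy0 i))
  have hvhatnorm : ∀ i, ‖vhat i‖ = 1 := by
    intro i
    rw [hvhat, norm_smul, Real.norm_eq_abs, abs_of_pos (inv_pos.2 (hypos i)), ← hy,
      inv_mul_cancel₀ (hy0 i)]
  have hgv : ∀ i, g i = θ⁻¹ • (v i - y i • vhat i) := by
    intro i
    have h1 : y i • vhat i = v i - θ • g i := by
      rw [hvhat, smul_inv_smul₀ (hy0 i)]
    rw [eq_inv_smul_iff₀ hθ', h1]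
    abel
  have key : ∀ i, 2 * ⟪g i, v i - vhat i⟫ = ((1 + y i) / θ) * ‖v i - vhat i‖ ^ 2 := by
    intro i
    have hnv : ⟪v i, v i⟫ = 1 := by
      rw [real_inner_self_eq_norm_sq, hv, one_pow]
    have hnvh : ⟪vhat i, vhat i⟫ = 1 := by
      rw [real_inner_self_eq_norm_sq, hvhatnorm, one_pow]
    have hsq : ‖v i - vhat i‖ ^ 2 = 2 - 2 * ⟪v i, vhat i⟫ := by
      rw [norm_sub_sq_real, hv, hvhatnorm]; ring
    rw [hgv, real_inner_smul_left, inner_sub_left, inner_sub_right, inner_sub_right,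
      real_inner_smul_left, real_inner_smul_left, hnv, hnvh,
      real_inner_comm (vhat i) (v i), hsq]
    rw [div_eq_mul_inv]
    rw [real_inner_comm (vhat i) (v i)]
    ring
  have main : (∑ a, ∑ b, C a b * ⟪v a, v b⟫) -
      (∑ a, ∑ b, C a b * ⟪vhat a, vhat b⟫) = ∑ i, 2 * ⟪g i, v i - vhat i⟫ := by
    have lhs_eq : (∑ a, ∑ b, C a b * ⟪v a, v b⟫) -
        (∑ a, ∑ b, C a b * ⟪vhat a, vhat b⟫) =
        ∑ a, ∑ b, (if b < a then 2 * C a b * (⟪v a, v b⟫ - ⟪vhat a, vhat b⟫) else 0) := by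
      rw [← Finset.sum_sub_distrib]
      simp only [← Finset.sum_sub_distrib, ← mul_sub]
      have split : ∀ a b : Fin n, C a b * (⟪v a, v b⟫ - ⟪vhat a, vhat b⟫) =
          (if b < a then C a b * (⟪v a, v b⟫ - ⟪vhat a, vhat b⟫) else 0) +
          (if a < b then C a b * (⟪v a, v b⟫ - ⟪vhat a, vhat b⟫) else 0) := by
        intro a b
        rcases lt_trichotomy a b with h | h | h
        · simp [h, not_lt_of_gt h]
        · simp [h, hdiag]
        · simp [h, not_lt_of_gt h]
      calc ∑ a, ∑ b, C a b * (⟪v a, v b⟫ - ⟪vhat a, vhat b⟫)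
          = ∑ a, ∑ b, ((if b < a then C a b * (⟪v a, v b⟫ - ⟪vhat a, vhat b⟫) else 0) +
            (if a < b then C a b * (⟪v a, v b⟫ - ⟪vhat a, vhat b⟫) else 0)) := by
            exact Finset.sum_congr rfl fun a _ => Finset.sum_congr rfl fun b _ => split a b
        _ = (∑ a, ∑ b, (if b < a then C a b * (⟪v a, v b⟫ - ⟪vhat a, vhat b⟫) else 0)) +
            (∑ a, ∑ b, (if a < b then C a b * (⟪v a, v b⟫ - ⟪vhat a, vhat b⟫) else 0)) := by
            simp [Finset.sum_add_distrib]
        _ = ∑ a, ∑ b, (if b < a then 2 * C a b * (⟪v a, v b⟫ - ⟪vhat a, vhat b⟫) else 0) := by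
            rw [Finset.sum_comm (f := fun a b =>
              (if a < b then C a b * (⟪v a, v b⟫ - ⟪vhat a, vhat b⟫) else 0))]
            rw [← Finset.sum_add_distrib]
            refine Finset.sum_congr rfl fun a _ => ?_
            rw [← Finset.sum_add_distrib]
            refine Finset.sum_congr rfl fun b _ => ?_
            by_cases h : b < a
            · simp only [h, if_true]
              rw [hC.apply a b, real_inner_comm (v b) (v a),
                real_inner_comm (vhat b) (vhat a)]
              ring
            · simp [h]
    have rhs_eq : (∑ i, 2 * ⟪g i, v i - vhat i⟫) =
        ∑ a, ∑ b, (if b < a then 2 * C a b * (⟪v a, v b⟫ - ⟪vhat a, vhat b⟫) else 0) := by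
      have hginner : ∀ i, ⟪g i, v i - vhat i⟫ =
          (∑ j, (if j < i then C i j * ⟪vhat j, v i - vhat i⟫ else 0)) +
          (∑ j, (if i < j then C i j * ⟪v j, v i - vhat i⟫ else 0)) := by
        intro i
        rw [hg, inner_add_left, sum_inner, sum_inner]
        simp only [Finset.sum_filter, real_inner_smul_left]
      calc (∑ i, 2 * ⟪g i, v i - vhat i⟫)
          = (∑ i, ∑ j, (if j < i then 2 * (C i j * ⟪vhat j, v i - vhat i⟫) else 0)) +
            (∑ i, ∑ j, (if i < j then 2 * (C i j * ⟪v j, v i - vhat i⟫) else 0)) := by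
            rw [← Finset.sum_add_distrib]
            refine Finset.sum_congr rfl fun i _ => ?_
            rw [hginner i, mul_add, Finset.mul_sum, Finset.mul_sum]
            congr 1 <;> exact Finset.sum_congr rfl fun j _ => by split_ifs <;> ring
        _ = ∑ a, ∑ b, (if b < a then 2 * C a b * (⟪v a, v b⟫ - ⟪vhat a, vhat b⟫) else 0) := by
            rw [Finset.sum_comm (f := fun i j =>
              (if i < j then 2 * (C i j * ⟪v j, v i - vhat i⟫) else 0))]
            rw [← Finset.sum_add_distrib]
            refine Finset.sum_congr rfl fun a _ => ?_
            rw [← Finset.sum_add_distrib]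
            refine Finset.sum_congr rfl fun b _ => ?_
            by_cases h : b < a
            · simp only [h, if_true]
              rw [hC.apply a b, inner_sub_right, inner_sub_right,
                real_inner_comm (vhat b) (v a), real_inner_comm (vhat b) (vhat a)]
              ring
            · simp [h]
    rw [lhs_eq, rhs_eq]
  rw [main]
  exact Finset.sum_congr rfl fun i _ => key i
end

section
/- Let S = C + D_y with y > 0 entrywise and C symmetric with zero diagonal, and let J_GS = −(L + D_y)^{-1} Lᵀ where L is the strict lower triangle of C. If S is not positive semidefinite, then the spectral radius of J_GS is strictly greater than 1. -/
/-!
Write `f(x) = xᵀ S x` and `M = L + D_y`, so that `S = M + Lᵀ` and one Gauss–Seidel step is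
`J x = x - e` with `M e = S x`. Expanding gives `f(J x) = f(x) - eᵀ D_y e`. Since
`-f(x) ≤ c ‖S x‖²` (spectral theorem) and `‖S x‖ = ‖M e‖ ≤ ‖M‖ ‖e‖`, the decrease
`eᵀ D_y e ≥ min y ‖e‖²` is at least `δ (-f(x))` for some `δ > 0`, i.e. `f(J x) ≤ (1 + δ) f(x)`.
Starting from `x₀` with `f(x₀) < 0`, the values `f(J^r x₀)` go to `-∞` like `(1 + δ)^r`,
so `‖J^r‖ ≥ b (1 + δ)^(r/2)`, and Gelfand's formula gives `ρ(J) ≥ √(1 + δ) > 1`.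
-/

open Matrix Filter Topology WithLp
open scoped RealInnerProductSpace Matrix.Norms.Frobenius

theorem EuclideanSpace.norm_toLp_sq {n : Type*} [Fintype n] (v : n → ℝ) :
    ‖toLp 2 v‖ ^ 2 = v ⬝ᵥ v := by
  rw [← real_inner_self_eq_norm_sq, EuclideanSpace.inner_toLp_toLp, star_trivial]

theorem Matrix.mulVec_dotProduct_mulVec_le {m n : Type*} [Fintype m] [Fintype n]
    (A : Matrix m n ℝ) (v : n → ℝ) : (A *ᵥ v) ⬝ᵥ (A *ᵥ v) ≤ ‖A‖ ^ 2 * (v ⬝ᵥ v) := by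
  have h : ‖toLp 2 (A *ᵥ v)‖ ≤ ‖A‖ * ‖toLp 2 v‖ := by
    simpa only [← frobenius_norm_replicateCol (ι := Unit), replicateCol_mulVec]
      using frobenius_norm_mul A (replicateCol Unit v)
  rw [← EuclideanSpace.norm_toLp_sq, ← EuclideanSpace.norm_toLp_sq, ← mul_pow]
  gcongr

theorem LinearMap.IsSymmetric.exists_neg_inner_le_mul_norm_sq {E : Type*}
    [NormedAddCommGroup E] [InnerProductSpace ℝ E] [FiniteDimensional ℝ E] {T : E →ₗ[ℝ] E}
    (hT : T.IsSymmetric) : ∃ c > 0, ∀ x, -⟪x, T x⟫ ≤ c * ‖T x‖ ^ 2 := by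
  set b := hT.eigenvectorBasis rfl
  set μ := hT.eigenvalues rfl
  have hb : ∀ x i, ⟪b i, T x⟫ = μ i * ⟪b i, x⟫ := fun x i => by
    rw [← hT, hT.apply_eigenvectorBasis, real_inner_smul_left]; rfl
  refine ⟨1 + ∑ i, |μ i|⁻¹, by positivity, fun x => ?_⟩
  have hquad : ⟪x, T x⟫ = ∑ i, μ i * ⟪b i, x⟫ ^ 2 := by
    rw [← b.sum_inner_mul_inner]
    refine Finset.sum_congr rfl fun i _ => ?_
    rw [hb, real_inner_comm]; ring
  have hnorm : ‖T x‖ ^ 2 = ∑ i, μ i ^ 2 * ⟪b i, x⟫ ^ 2 := by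
    rw [← real_inner_self_eq_norm_sq, ← b.sum_inner_mul_inner]
    refine Finset.sum_congr rfl fun i _ => ?_
    rw [real_inner_comm, hb]; ring
  rw [hquad, hnorm, Finset.mul_sum, ← Finset.sum_neg_distrib]
  refine Finset.sum_le_sum fun i _ => ?_
  have hμ : -μ i ≤ (1 + ∑ j, |μ j|⁻¹) * μ i ^ 2 := calc
    -μ i ≤ |μ i|⁻¹ * μ i ^ 2 := by
      rw [← sq_abs, sq, ← mul_assoc]
      rcases eq_or_ne (μ i) 0 with h | h
      · simp [h]
      · rw [inv_mul_cancel₀ (abs_ne_zero.2 h), one_mul]; exact neg_le_abs _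
    _ ≤ (1 + ∑ j, |μ j|⁻¹) * μ i ^ 2 := by
      gcongr
      exact le_add_of_nonneg_of_le zero_le_one
        (Finset.single_le_sum (fun j _ => inv_nonneg.2 (abs_nonneg (μ j))) (Finset.mem_univ i))
  nlinarith [sq_nonneg ⟪b i, x⟫]

theorem Matrix.IsHermitian.exists_neg_dotProduct_mulVec_le {n : Type*} [Fintype n]
    [DecidableEq n] {S : Matrix n n ℝ} (hS : S.IsHermitian) :
    ∃ c > 0, ∀ x, -(x ⬝ᵥ S *ᵥ x) ≤ c * ((S *ᵥ x) ⬝ᵥ (S *ᵥ x)) := by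
  obtain ⟨c, hc, h⟩ :=
    (isSymmetric_toEuclideanLin_iff.mpr hS).exists_neg_inner_le_mul_norm_sq
  refine ⟨c, hc, fun x => ?_⟩
  simpa [EuclideanSpace.inner_toLp_toLp, dotProduct_comm, EuclideanSpace.norm_toLp_sq]
    using h (toLp 2 x)

theorem Matrix.exists_dotProduct_mulVec_neg_of_not_posSemidef {n : Type*} [Fintype n]
    {S : Matrix n n ℝ} (hS : S.IsHermitian) (h : ¬ S.PosSemidef) :
    ∃ x, x ⬝ᵥ S *ᵥ x < 0 := by
  by_contra! hnonneg
  exact h (.of_dotProduct_mulVec_nonneg hS fun x => by simpa using hnonneg x)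

theorem Finite.exists_pos_le_of_forall_pos {ι : Type*} [Finite ι] {y : ι → ℝ}
    (hy : ∀ i, 0 < y i) : ∃ d > 0, ∀ i, d ≤ y i := by
  rcases isEmpty_or_nonempty ι with _ | _
  · exact ⟨1, one_pos, isEmptyElim⟩
  · obtain ⟨i₀, hi₀⟩ := Finite.exists_min y
    exact ⟨y i₀, hy i₀, hi₀⟩

theorem Matrix.isSymm_add_add_transpose {n R : Type*} [AddCommMonoid R] {L D : Matrix n n R}
    (hD : D.IsSymm) : (L + D + Lᵀ).IsSymm := by
  rw [IsSymm, transpose_add, transpose_add, transpose_transpose, hD.eq]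
  abel

theorem Matrix.dotProduct_mulVec_gaussSeidel_eq {R n : Type*} [CommRing R] [Fintype n]
    {L D J : Matrix n n R} (hD : D.IsSymm) (hJ : (L + D) * J = -Lᵀ) (x : n → R) :
    (J *ᵥ x) ⬝ᵥ (L + D + Lᵀ) *ᵥ (J *ᵥ x) =
      x ⬝ᵥ (L + D + Lᵀ) *ᵥ x - (x - J *ᵥ x) ⬝ᵥ D *ᵥ (x - J *ᵥ x) := by
  obtain ⟨e, hJx⟩ : ∃ e, J *ᵥ x = x - e := ⟨x - J *ᵥ x, (sub_sub_cancel _ _).symm⟩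
  have he : (L + D) *ᵥ e = (L + D + Lᵀ) *ᵥ x := by
    rw [show e = x - J *ᵥ x by rw [hJx, sub_sub_cancel], mulVec_sub, mulVec_mulVec, hJ,
      neg_mulVec, sub_neg_eq_add, ← add_mulVec]
  have hxe : x ⬝ᵥ (L + D + Lᵀ) *ᵥ e = e ⬝ᵥ (L + D + Lᵀ) *ᵥ x := by
    conv_lhs => rw [← (isSymm_add_add_transpose hD).eq]
    exact dotProduct_transpose_mulVec _ _ _
  have hex : e ⬝ᵥ (L + D + Lᵀ) *ᵥ x = e ⬝ᵥ L *ᵥ e + e ⬝ᵥ D *ᵥ e := by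
    rw [← he, add_mulVec, dotProduct_add]
  have hee : e ⬝ᵥ (L + D + Lᵀ) *ᵥ e = e ⬝ᵥ L *ᵥ e + e ⬝ᵥ D *ᵥ e + e ⬝ᵥ L *ᵥ e := by
    rw [add_mulVec, add_mulVec, dotProduct_add, dotProduct_add, dotProduct_transpose_mulVec]
  rw [hJx, sub_sub_cancel, mulVec_sub, dotProduct_sub, sub_dotProduct, sub_dotProduct, hxe,
    hex, hee]
  ring

theorem Matrix.exists_dotProduct_mulVec_gaussSeidel_le {n : Type*} [Fintype n] [DecidableEq n]
    {L J : Matrix n n ℝ} {y : n → ℝ} (hy : ∀ i, 0 < y i)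
    (hJ : (L + diagonal y) * J = -Lᵀ) :
    ∃ δ > 0, ∀ x, (J *ᵥ x) ⬝ᵥ (L + diagonal y + Lᵀ) *ᵥ (J *ᵥ x) ≤
      (1 + δ) * (x ⬝ᵥ (L + diagonal y + Lᵀ) *ᵥ x) := by
  set S := L + diagonal y + Lᵀ
  obtain ⟨c, hc, hSx⟩ := (isHermitian_iff_isSymm.mpr (isSymm_add_add_transpose (isSymm_diagonal y)))
    |>.exists_neg_dotProduct_mulVec_le
  obtain ⟨d, hd, hdy⟩ := Finite.exists_pos_le_of_forall_pos hy
  set K := ‖L + diagonal y‖ ^ 2 + 1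
  have hK : 0 < K := by positivity
  refine ⟨d / (c * K), by positivity, fun x => ?_⟩
  set e := x - J *ᵥ x
  have hMe : (L + diagonal y) *ᵥ e = S *ᵥ x := by
    rw [mulVec_sub, mulVec_mulVec, hJ, neg_mulVec, sub_neg_eq_add, ← add_mulVec]
  have hee : 0 ≤ e ⬝ᵥ e := by rw [← EuclideanSpace.norm_toLp_sq]; positivity
  have hMK : (S *ᵥ x) ⬝ᵥ (S *ᵥ x) ≤ K * (e ⬝ᵥ e) := by
    rw [← hMe]
    exact (mulVec_dotProduct_mulVec_le _ e).trans (by gcongr; simp [K])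
  have hDe : d * (e ⬝ᵥ e) ≤ e ⬝ᵥ diagonal y *ᵥ e := by
    simp only [dotProduct, mulVec_diagonal, Finset.mul_sum]
    exact Finset.sum_le_sum fun i _ => by nlinarith [hdy i, mul_self_nonneg (e i)]
  have hdecrease : d / (c * K) * -(x ⬝ᵥ S *ᵥ x) ≤ d * (e ⬝ᵥ e) := calc
    d / (c * K) * -(x ⬝ᵥ S *ᵥ x) ≤ d / (c * K) * (c * (K * (e ⬝ᵥ e))) := by
      gcongr; exact (hSx x).trans (by gcongr)
    _ = d * (e ⬝ᵥ e) := by field_simp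
  rw [dotProduct_mulVec_gaussSeidel_eq (isSymm_diagonal y) hJ]
  linarith

theorem Matrix.exists_pos_mul_pow_le_norm_pow {n : Type*} [Fintype n] [DecidableEq n]
    {S J : Matrix n n ℝ} (hS : S.IsHermitian) {a : ℝ} (ha : 0 ≤ a)
    (hJ : ∀ x, (J *ᵥ x) ⬝ᵥ S *ᵥ (J *ᵥ x) ≤ a * (x ⬝ᵥ S *ᵥ x))
    {x₀ : n → ℝ} (hx₀ : x₀ ⬝ᵥ S *ᵥ x₀ < 0) :
    ∃ b > 0, ∀ r : ℕ, b * √a ^ r ≤ ‖J ^ r‖ := by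
  obtain ⟨c, hc, hSx⟩ := hS.exists_neg_dotProduct_mulVec_le
  set B := c * ‖S‖ ^ 2 * (x₀ ⬝ᵥ x₀)
  have hiter : ∀ r : ℕ, (J ^ r *ᵥ x₀) ⬝ᵥ S *ᵥ (J ^ r *ᵥ x₀) ≤ a ^ r * (x₀ ⬝ᵥ S *ᵥ x₀) := by
    intro r
    induction r with
    | zero => simp
    | succ r ih =>
      rw [pow_succ', ← mulVec_mulVec, pow_succ', mul_assoc]
      exact (hJ _).trans (mul_le_mul_of_nonneg_left ih ha)
  have hbound : ∀ r : ℕ, a ^ r * -(x₀ ⬝ᵥ S *ᵥ x₀) ≤ B * ‖J ^ r‖ ^ 2 := fun r => calc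
    a ^ r * -(x₀ ⬝ᵥ S *ᵥ x₀) ≤ -((J ^ r *ᵥ x₀) ⬝ᵥ S *ᵥ (J ^ r *ᵥ x₀)) := by
      linarith [hiter r]
    _ ≤ c * (‖S‖ ^ 2 * ((J ^ r *ᵥ x₀) ⬝ᵥ (J ^ r *ᵥ x₀))) :=
      (hSx _).trans (by gcongr; exact mulVec_dotProduct_mulVec_le _ _)
    _ ≤ c * (‖S‖ ^ 2 * (‖J ^ r‖ ^ 2 * (x₀ ⬝ᵥ x₀))) := by
      gcongr; exact mulVec_dotProduct_mulVec_le _ _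
    _ = B * ‖J ^ r‖ ^ 2 := by ring
  have hB : 0 < B := by
    have hx₀x₀ : 0 ≤ x₀ ⬝ᵥ x₀ := by rw [← EuclideanSpace.norm_toLp_sq]; positivity
    refine (show 0 ≤ B by positivity).lt_of_ne fun hB0 => ?_
    have h0 := hbound 0
    rw [← hB0] at h0
    linarith
  have hq : 0 < -(x₀ ⬝ᵥ S *ᵥ x₀) / B := div_pos (neg_pos.2 hx₀) hB
  refine ⟨√(-(x₀ ⬝ᵥ S *ᵥ x₀) / B), Real.sqrt_pos.2 hq, fun r => ?_⟩
  rw [← pow_le_pow_iff_left₀ (by positivity) (norm_nonneg _) two_ne_zero, mul_pow, ← pow_mul,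
    mul_comm r, pow_mul, Real.sq_sqrt ha, Real.sq_sqrt hq.le, div_mul_eq_mul_div,
    div_le_iff₀ hB, mul_comm, mul_comm (‖J ^ r‖ ^ 2)]
  exact hbound r

theorem spectrum.ofReal_le_spectralRadius_of_mul_pow_le_norm_pow {A : Type*} [NormedRing A]
    [NormedAlgebra ℂ A] [CompleteSpace A] {a : A} {b θ : ℝ} (hb : 0 < b) (hθ : 0 ≤ θ)
    (h : ∀ r : ℕ, b * θ ^ r ≤ ‖a ^ r‖) : ENNReal.ofReal θ ≤ spectralRadius ℂ a := by
  have hb1 : Tendsto (fun r : ℕ => b ^ (1 / r : ℝ)) atTop (𝓝 1) := by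
    simpa [Function.comp_def] using (Real.continuousAt_const_rpow hb.ne').tendsto.comp
      tendsto_one_div_atTop_nhds_zero_nat
  have hlim : Tendsto (fun r : ℕ => ENNReal.ofReal (b ^ (1 / r : ℝ) * θ)) atTop
      (𝓝 (ENNReal.ofReal θ)) := by
    simpa using ENNReal.tendsto_ofReal (hb1.mul_const θ)
  refine le_of_tendsto_of_tendsto hlim (pow_norm_pow_one_div_tendsto_nhds_spectralRadius a) ?_
  filter_upwards [eventually_ne_atTop 0] with r hr
  gcongr
  calc b ^ (1 / r : ℝ) * θ = (b * θ ^ r) ^ (1 / r : ℝ) := by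
        rw [Real.mul_rpow hb.le (by positivity), one_div, Real.pow_rpow_inv_natCast hθ hr]
    _ ≤ ‖a ^ r‖ ^ (1 / r : ℝ) := by gcongr; exact h r

theorem spectrum.exists_lt_nnnorm_of_lt_spectralRadius {𝕜 A : Type*} [NormedField 𝕜] [Ring A]
    [Algebra 𝕜 A] {a : A} {r : NNReal} (h : (r : ENNReal) < spectralRadius 𝕜 a) :
    ∃ μ ∈ spectrum 𝕜 a, r < ‖μ‖₊ := by
  obtain ⟨μ, hμ⟩ := lt_iSup_iff.mp h
  obtain ⟨hμσ, hμr⟩ := lt_iSup_iff.mp hμ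
  exact ⟨μ, hμσ, ENNReal.coe_lt_coe.mp hμr⟩

theorem Matrix.exists_mulVec_eq_smul_of_mem_spectrum {n K : Type*} [Fintype n] [DecidableEq n]
    [Field K] {A : Matrix n n K} {μ : K} (h : μ ∈ spectrum K A) :
    ∃ w ≠ 0, A *ᵥ w = μ • w := by
  rw [← spectrum_toLin'] at h
  obtain ⟨w, hw⟩ := (Module.End.HasEigenvalue.of_mem_spectrum h).exists_hasEigenvector
  exact ⟨w, hw.2, by simpa using Module.End.mem_eigenspace_iff.mp hw.1⟩

theorem Matrix.IsSymm.eq_add_transpose_of_diag_eq_zero {n R : Type*} [LinearOrder n]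
    [AddMonoid R] {C L : Matrix n n R} (hC : C.IsSymm) (hdiag : ∀ i, C i i = 0)
    (hL : ∀ i j, L i j = if j < i then C i j else 0) : C = L + Lᵀ := by
  ext i j
  simp only [add_apply, transpose_apply, hL]
  rcases lt_trichotomy i j with h | rfl | h
  · rw [if_neg h.not_gt, if_pos h, zero_add, hC.apply]
  · simp [hdiag]
  · rw [if_pos h, if_neg h.not_gt, add_zero]

theorem Matrix.det_add_diagonal_of_forall_le {n R : Type*} [Fintype n] [DecidableEq n]
    [LinearOrder n] [CommRing R] {L : Matrix n n R} (hL : ∀ i j, i ≤ j → L i j = 0)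
    (y : n → R) : (L + diagonal y).det = ∏ i, y i := by
  rw [det_of_isLowerTriangular _ fun i j (hij : i < j) => ?_]
  · simp [hL _ _ le_rfl]
  · simp [hL i j hij.le, hij.ne]

/-- If `S = C + D_y` is not positive semidefinite, the Gauss–Seidel
iteration matrix `J_GS = -(L + D_y)⁻¹ Lᵀ` has spectral radius `> 1`,
i.e. it has a (complex) eigenvalue of modulus greater than one. -/
theorem gaussSeidel_spectral_radius_gt_one
    (n : ℕ) (C : Matrix (Fin n) (Fin n) ℝ) (hC : C.IsSymm)
    (hdiag : ∀ i, C i i = 0)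
    (y : Fin n → ℝ) (hy : ∀ i, 0 < y i)
    (L : Matrix (Fin n) (Fin n) ℝ)
    (hL : ∀ i j, L i j = if j < i then C i j else 0)
    (S : Matrix (Fin n) (Fin n) ℝ) (hS : S = C + Matrix.diagonal y)
    (hnpsd : ¬ S.PosSemidef) :
    ∃ μ : ℂ, ∃ w : Fin n → ℂ, w ≠ 0 ∧
      ((-((L + Matrix.diagonal y)⁻¹ * L.transpose)).map
        (algebraMap ℝ ℂ)).mulVec w = μ • w ∧ 1 < ‖μ‖ := by
  set J := -((L + diagonal y)⁻¹ * Lᵀ)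
  have hSL : S = L + diagonal y + Lᵀ := by
    rw [hS, hC.eq_add_transpose_of_diag_eq_zero hdiag hL]
    abel
  have hSherm : S.IsHermitian := hSL ▸ (isHermitian_iff_isSymm.mpr (isSymm_add_add_transpose (isSymm_diagonal y)))
  obtain ⟨x₀, hx₀⟩ := exists_dotProduct_mulVec_neg_of_not_posSemidef hSherm hnpsd
  have hdet : IsUnit (L + diagonal y).det := by
    rw [det_add_diagonal_of_forall_le (fun i j hij => by simp [hL, hij.not_gt])]
    exact (Finset.prod_pos fun i _ => hy i).ne'.isUnit
  have hJ : (L + diagonal y) * J = -Lᵀ := by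
    rw [mul_neg, ← Matrix.mul_assoc, mul_nonsing_inv _ hdet, Matrix.one_mul]
  obtain ⟨δ, hδ, hstep⟩ := exists_dotProduct_mulVec_gaussSeidel_le hy hJ
  obtain ⟨b, hb, hgrow⟩ := exists_pos_mul_pow_le_norm_pow hSherm (by linarith) (hSL ▸ hstep) hx₀
  have hρ : ENNReal.ofReal √(1 + δ) ≤ spectralRadius ℂ (J.map (algebraMap ℝ ℂ)) :=
    spectrum.ofReal_le_spectralRadius_of_mul_pow_le_norm_pow hb (Real.sqrt_nonneg _) fun r => by
      rw [← Matrix.map_pow, frobenius_norm_map_eq _ _ fun a => by simp]; exact hgrow r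
  have hθ : 1 < √(1 + δ) := Real.lt_sqrt zero_le_one |>.2 (by linarith)
  obtain ⟨μ, hμ, hμ1⟩ := spectrum.exists_lt_nnnorm_of_lt_spectralRadius (r := 1)
    ((ENNReal.one_lt_ofReal.2 hθ).trans_le hρ)
  obtain ⟨w, hw, hJw⟩ := exists_mulVec_eq_smul_of_mem_spectrum hμ
  exact ⟨μ, w, hw, hJw, by exact_mod_cast hμ1⟩
end

section
/- Let n, k be such that k(k+1)/2 > n. The set of symmetric n×n matrices C for which there exists a first-order critical point V ∈ ℝ^{k×n} of the problem min ⟨C, VᵀV⟩ subject to unit-norm columns with rank(V) = k has Lebesgue measure zero in the space of symmetric matrices. -/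
/-!
A first-order critical point `V` of rank `k` satisfies `V * (C + diag y) = 0`, so `C + diag y`
has rank at most `r = n - k`. Expressing all columns through `r` spanning ones, every symmetric
matrix of rank `≤ r` is `Xᵀ A X` with `A` symmetric `r × r` and `X = [1 | x]`, up to a
permutation of the indices. Hence `C` lies in finitely many images of polynomial maps in
`r(r+1)/2 + r k + n` variables, fewer than the `n(n+1)/2` coordinates of `C` exactly when
`k(k+1)/2 > n`, and such images are Lebesgue-null.
-/
/-- The symmetric matrix determined by its upper-triangular entries. -/
noncomputable def symOfUpper (n : ℕ)
    (u : {p : Fin n × Fin n // p.1 ≤ p.2} → ℝ) :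
    Matrix (Fin n) (Fin n) ℝ := fun i j =>
  if h : i ≤ j then u ⟨(i, j), h⟩ else u ⟨(j, i), (le_total i j).resolve_left h⟩

open MeasureTheory Module Set Matrix

theorem MeasureTheory.addHaar_range_eq_zero_of_finrank_lt
    {E F : Type*} [NormedAddCommGroup E] [NormedSpace ℝ E] [FiniteDimensional ℝ E]
    [NormedAddCommGroup F] [NormedSpace ℝ F] [FiniteDimensional ℝ F]
    [MeasurableSpace F] [BorelSpace F] (μ : Measure F) [μ.IsAddHaarMeasure]
    {f : E → F} (hf : Differentiable ℝ f) (hdim : finrank ℝ E < finrank ℝ F) :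
    μ (range f) = 0 := by
  -- Precompose `f` with a linear surjection `L : F → E`; the derivative of `f ∘ L` kills
  -- `ker L ≠ ⊥`.
  let G := Fin (finrank ℝ F - finrank ℝ E) → ℝ
  let φ : F ≃L[ℝ] E × G := .ofFinrankEq (by simp [G, finrank_prod]; omega)
  let L : F →L[ℝ] E := (ContinuousLinearMap.fst ℝ E G).comp (φ : F →L[ℝ] E × G)
  have hL : Function.Surjective L := Prod.fst_surjective.comp φ.surjective
  rw [← hL.range_comp, ← image_univ]
  refine addHaar_image_eq_zero_of_det_fderivWithin_eq_zero μ
    (fun x _ => ((hf (L x)).hasFDerivAt.comp x L.hasFDerivAt).hasFDerivWithinAt) fun x _ => ?_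
  refine LinearMap.det_eq_zero_iff_ker_ne_bot.mpr fun hker => ?_
  exact LinearMap.ker_ne_bot_of_finrank_lt hdim
    (eq_bot_mono (LinearMap.ker_le_ker_comp _ (fderiv ℝ f (L x) : E →ₗ[ℝ] F)) hker)

namespace Matrix

variable {K : Type*} [Field K]

theorem exists_sumEquiv_forall_col_mem_span {m n : Type*} [Fintype n] (A : Matrix m n K)
    {r k : ℕ} (hr : A.rank ≤ r) (hn : r + k = Fintype.card n) :
    ∃ e : Fin r ⊕ Fin k ≃ n,
      ∀ j, A.col j ∈ Submodule.span K (range fun i => A.col (e (.inl i))) := by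
  classical
  obtain ⟨κ, a, ha, hspan, hli⟩ := exists_linearIndependent' K A.col
  have : Fintype κ := Fintype.ofInjective a ha
  have hcard : (Finset.univ.image a).card ≤ r := by
    rw [Finset.card_image_of_injective _ ha, Finset.card_univ, ← finrank_span_eq_card hli,
      hspan, ← rank_eq_finrank_span_cols]
    exact hr
  obtain ⟨J, haJ, -, hJ⟩ := Finset.exists_subsuperset_card_eq (Finset.subset_univ _) hcard
    (by rw [Finset.card_univ]; omega)
  have hJc : Fintype.card {j // j ∉ J} = k := by
    rw [Fintype.card_subtype_compl, Fintype.card_coe]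
    omega
  let e : Fin r ⊕ Fin k ≃ n := ((J.equivFinOfCardEq hJ).symm.sumCongr
    (Fintype.equivFinOfCardEq hJc).symm).trans (Equiv.sumCompl (· ∈ J))
  refine ⟨e, fun j => Submodule.span_mono ?_ <|
    hspan ▸ Submodule.subset_span (mem_range_self j)⟩
  rintro _ ⟨i, rfl⟩
  exact ⟨J.equivFinOfCardEq hJ ⟨a i, haJ (by simp)⟩, by simp [e]⟩

variable {m n κ ν : Type*} [Fintype κ] [DecidableEq κ]

theorem exists_submatrix_eq_mul_fromCols_one (M : Matrix m n K) (e : κ ⊕ ν ≃ n)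
    (hM : ∀ j, M.col j ∈ Submodule.span K (range fun i => M.col (e (.inl i)))) :
    ∃ x : Matrix κ ν K, M.submatrix id e = M.submatrix id (e ∘ .inl) * fromCols 1 x := by
  choose c hc using fun l => (Submodule.mem_span_range_iff_exists_fun K).mp (hM (e (.inr l)))
  refine ⟨of fun i l => c l i, ?_⟩
  ext p (i | l)
  · simp [mul_apply, one_apply]
  · simpa [mul_apply, mul_comm] using (congrFun (hc l) p).symm

theorem IsSymm.exists_submatrix_eq_transpose_mul_mul {M : Matrix n n K} (hM : M.IsSymm)
    (e : κ ⊕ ν ≃ n)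
    (hcol : ∀ j, M.col j ∈ Submodule.span K (range fun i => M.col (e (.inl i)))) :
    ∃ x : Matrix κ ν K, M.submatrix e e =
      (fromCols 1 x)ᵀ * M.submatrix (e ∘ .inl) (e ∘ .inl) * fromCols 1 x := by
  obtain ⟨x, hx⟩ := exists_submatrix_eq_mul_fromCols_one M e hcol
  refine ⟨x, ?_⟩
  have hcols : M.submatrix e e = M.submatrix e (e ∘ .inl) * fromCols 1 x :=
    congrArg (Matrix.submatrix · e id) hx
  have hrows : M.submatrix (e ∘ .inl) e = M.submatrix (e ∘ .inl) (e ∘ .inl) * fromCols 1 x :=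
    congrArg (Matrix.submatrix · (e ∘ .inl) id) hx
  calc M.submatrix e e = (M.submatrix e e)ᵀ := (hM.submatrix e).symm
    _ = (fromCols 1 x)ᵀ * Mᵀ.submatrix (e ∘ .inl) e := by
        rw [hcols, transpose_mul, transpose_submatrix]
    _ = _ := by rw [hM.eq, hrows, Matrix.mul_assoc]

end Matrix

abbrev UpperIdx (n : ℕ) := {p : Fin n × Fin n // p.1 ≤ p.2}

theorem two_mul_card_upperIdx (n : ℕ) : 2 * Fintype.card (UpperIdx n) = n * (n + 1) := by
  rw [← Fintype.card_congr (Sym2.sortEquiv (α := Fin n)), Sym2.card, Fintype.card_fin,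
    Nat.choose_two_right, add_tsub_cancel_right, mul_comm (n + 1)]
  exact Nat.mul_div_cancel' (Nat.even_mul_succ_self n).two_dvd

def upperEntries {n : ℕ} (A : Matrix (Fin n) (Fin n) ℝ) (p : UpperIdx n) : ℝ := A p.1.1 p.1.2

theorem upperEntries_symOfUpper {n : ℕ} (u : UpperIdx n → ℝ) :
    upperEntries (symOfUpper n u) = u := by
  ext p
  simp [upperEntries, symOfUpper, p.2]

theorem isSymm_symOfUpper {n : ℕ} (u : UpperIdx n → ℝ) : (symOfUpper n u).IsSymm := by
  ext i j
  rcases lt_trichotomy i j with h | rfl | h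
  · simp [symOfUpper, h.le, h.not_ge]
  · rfl
  · simp [symOfUpper, h.le, h.not_ge]

theorem Matrix.IsSymm.symOfUpper_upperEntries {n : ℕ} {A : Matrix (Fin n) (Fin n) ℝ}
    (hA : A.IsSymm) : symOfUpper n (upperEntries A) = A := by
  ext i j
  by_cases h : i ≤ j
  · simp [symOfUpper, upperEntries, h]
  · simp [symOfUpper, upperEntries, h, hA.apply]

noncomputable def lowRankSym {r k : ℕ} (a : UpperIdx r → ℝ) (x : Fin r → Fin k → ℝ) :
    Matrix (Fin r ⊕ Fin k) (Fin r ⊕ Fin k) ℝ :=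
  (fromCols 1 (of x))ᵀ * symOfUpper r a * fromCols 1 (of x)

theorem Matrix.IsSymm.exists_eq_submatrix_lowRankSym {n r k : ℕ}
    {M : Matrix (Fin n) (Fin n) ℝ} (hM : M.IsSymm) (hr : M.rank ≤ r) (hn : r + k = n) :
    ∃ (e : Fin r ⊕ Fin k ≃ Fin n) (a : UpperIdx r → ℝ) (x : Fin r → Fin k → ℝ),
      M = (lowRankSym a x).submatrix e.symm e.symm := by
  obtain ⟨e, he⟩ := M.exists_sumEquiv_forall_col_mem_span hr (by simpa using hn)
  obtain ⟨x, hx⟩ := hM.exists_submatrix_eq_transpose_mul_mul e he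
  refine ⟨e, upperEntries (M.submatrix (e ∘ .inl) (e ∘ .inl)), of.symm x, ?_⟩
  rw [lowRankSym, (hM.submatrix _).symOfUpper_upperEntries, Equiv.apply_symm_apply, ← hx]
  simp

section Differentiability

variable {E : Type*} [NormedAddCommGroup E] [NormedSpace ℝ E]

@[fun_prop]
theorem Differentiable.symOfUpper_apply {n : ℕ} {f : E → UpperIdx n → ℝ}
    (hf : Differentiable ℝ f) (i j : Fin n) :
    Differentiable ℝ fun z => symOfUpper n (f z) i j := by
  unfold symOfUpper
  split_ifs <;> fun_prop

@[fun_prop]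
theorem Differentiable.fromCols_one_apply {r k : ℕ} {f : E → Fin r → Fin k → ℝ}
    (hf : Differentiable ℝ f) (a : Fin r) (j : Fin r ⊕ Fin k) :
    Differentiable ℝ fun z => fromCols (1 : Matrix (Fin r) (Fin r) ℝ) (of (f z)) a j := by
  cases j <;> simp only [fromCols_apply_inl, fromCols_apply_inr, of_apply] <;> fun_prop

end Differentiability

abbrev LowRankParams (r k n : ℕ) := (UpperIdx r → ℝ) × (Fin r → Fin k → ℝ) × (Fin n → ℝ)

noncomputable def lowRankMinusDiag {r k n : ℕ} (e : Fin r ⊕ Fin k ≃ Fin n)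
    (p : LowRankParams r k n) : UpperIdx n → ℝ :=
  upperEntries ((lowRankSym p.1 p.2.1).submatrix e.symm e.symm - diagonal p.2.2)

theorem differentiable_lowRankMinusDiag {r k n : ℕ} (e : Fin r ⊕ Fin k ≃ Fin n) :
    Differentiable ℝ (lowRankMinusDiag e) := by
  rw [differentiable_pi]
  intro q
  simp only [lowRankMinusDiag, lowRankSym, upperEntries, Matrix.sub_apply, submatrix_apply,
    mul_apply, transpose_apply, diagonal_apply]
  split_ifs <;> fun_prop

theorem finrank_lowRankParams_lt {r k n : ℕ} (hn : r + k = n) (hk : 2 * n < k * (k + 1)) :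
    finrank ℝ (LowRankParams r k n) < finrank ℝ (UpperIdx n → ℝ) := by
  simp only [finrank_prod, finrank_fintype_fun_eq_card, Fintype.card_fin, finrank_pi_fintype,
    Finset.sum_const, Finset.card_univ, smul_eq_mul]
  have := two_mul_card_upperIdx r
  have := two_mul_card_upperIdx n
  subst hn
  nlinarith

theorem mem_iUnion_range_lowRankMinusDiag {n k : ℕ} {u : UpperIdx n → ℝ} {y : Fin n → ℝ}
    {V : Matrix (Fin k) (Fin n) ℝ} (hV : V * (symOfUpper n u + diagonal y) = 0)
    (hVrank : V.rank = k) :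
    u ∈ ⋃ e : Fin (n - k) ⊕ Fin k ≃ Fin n, range (lowRankMinusDiag e) := by
  have hkn : k ≤ n := hVrank ▸ V.rank_le_width
  have hrank : (symOfUpper n u + diagonal y).rank ≤ n - k := by
    have := rank_add_rank_le_card_of_mul_eq_zero hV
    rw [hVrank, Fintype.card_fin] at this
    omega
  have hsymm := (isSymm_symOfUpper u).add (isSymm_diagonal y)
  obtain ⟨e, a, x, hM⟩ := hsymm.exists_eq_submatrix_lowRankSym hrank (Nat.sub_add_cancel hkn)
  refine mem_iUnion.mpr ⟨e, (a, x, y), ?_⟩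
  rw [lowRankMinusDiag, ← hM, add_sub_cancel_right, upperEntries_symOfUpper]

/-- For `k(k+1)/2 > n`, the set of symmetric `C` admitting a rank-`k`
first-order critical point `V` (i.e. `V(C + diag y) = 0` with
`yᵢ = ‖V cᵢ‖` and unit-norm columns) has Lebesgue measure zero. -/
theorem rank_deficiency_critical_points
    (n k : ℕ) (hk : 2 * n < k * (k + 1)) :
    MeasureTheory.volume
      {u : {p : Fin n × Fin n // p.1 ≤ p.2} → ℝ |
        ∃ V : Matrix (Fin k) (Fin n) ℝ,
          (∀ i, ∑ a, (V a i) ^ 2 = 1) ∧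
          V * (symOfUpper n u + Matrix.diagonal (fun i =>
            Real.sqrt (∑ a,
              (V.mulVec (fun j => symOfUpper n u j i)) a ^ 2))) = 0 ∧
          V.rank = k} = 0 :=
  measure_mono_null (fun _ ⟨_, _, hV, hVrank⟩ => mem_iUnion_range_lowRankMinusDiag hV hVrank)
    (measure_iUnion_null fun e => addHaar_range_eq_zero_of_finrank_lt volume
      (differentiable_lowRankMinusDiag e)
      (finrank_lowRankParams_lt (by simpa using Fintype.card_congr e) hk))
end
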